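/- Watson's identity: Li₂(α) − Li₂(α²) = π²/42 + (log α)², where α = (1/2)·sec(2π/7). -/

import Mathlib

/-!
Put `b = α / (1 + α)`. The cubic satisfied by `α` makes `1 - α = b²`, `1 - α² = α b` and
`1 - b = b / α`, so the duplication formula `Li₂ x + Li₂ (-x) = Li₂ (x²) / 2`, Euler's reflection
`Li₂ x + Li₂ (1 - x) = π² / 6 - log x log (1 - x)` and Landen's identity
`Li₂ x + Li₂ (-x / (1 - x)) = -log² (1 - x) / 2`, taken at `α`, `b` and `1 - b`, at `α`, `α²` and
`1 - b`, and at `α b`, `b` and `(1 - b)²` respectively, only involve the values of `Li₂` at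
`±α, α², ±b, b², ±(1 - b), (1 - b)², α b`. Eliminating all of them but `Li₂ α - Li₂ α²` gives
Watson's identity. Reflection and Landen's identity hold because both sides have the same
derivative, `Li₂' x = -log (1 - x) / x`, and agree at `x = 1`, resp. `x = 0`.
-/

/-- The polylogarithm `Li_s(x) = ∑_{n ≥ 1} x^n / n^s` as a real series. -/
noncomputable def Li (s : ℕ) (x : ℝ) : ℝ := ∑' n : ℕ, x ^ (n + 1) / (n + 1 : ℝ) ^ s

open Real Set

lemma eq_of_hasDerivAt_zero {f : ℝ → ℝ} {a b : ℝ} (hab : a ≤ b) (hf : ContinuousOn f (Icc a b))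
    (hf' : ∀ x ∈ Ioo a b, HasDerivAt f 0 x) : f a = f b := by
  rcases hab.eq_or_lt with rfl | hab
  · rfl
  obtain ⟨c, -, hc⟩ := exists_hasDerivAt_eq_slope f (fun _ => 0) hab hf hf'
  rw [eq_comm, div_eq_zero_iff, sub_eq_zero, sub_eq_zero] at hc
  exact hc.resolve_right hab.ne' |>.symm

lemma continuousOn_log_mul_log_one_sub : ContinuousOn (fun t => log t * log (1 - t)) (Ioi 0) := by
  -- this factorization makes the continuity at `t = 1`, where `log (1 - t)` blows up, visible
  have key (t : ℝ) : log t * log (1 - t) = -(dslope log 1 t * ((1 - t) * log (1 - t))) := by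
    rcases eq_or_ne t 1 with rfl | ht
    · simp
    rw [dslope_of_ne _ ht, slope_def_field, log_one]
    field_simp [sub_ne_zero.mpr ht, sub_ne_zero.mpr ht.symm]
    ring
  rw [funext key]
  intro t ht
  refine ContinuousAt.continuousWithinAt (ContinuousAt.neg (ContinuousAt.mul ?_ ?_))
  · rcases eq_or_ne t 1 with rfl | ht1
    · exact continuousAt_dslope_same.mpr (differentiableAt_log one_ne_zero)
    · exact (continuousAt_dslope_of_ne ht1).mpr (continuousAt_log (ne_of_gt ht))
  · exact (continuous_mul_log.comp (continuous_const.sub continuous_id)).continuousAt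

section Polylog

variable {s : ℕ} {x : ℝ}

lemma summable_one_div_nat_add_one_pow (hs : 2 ≤ s) :
    Summable fun n : ℕ => 1 / ((n : ℝ) + 1) ^ s := by
  simpa using (summable_nat_add_iff 1).mpr (summable_one_div_nat_pow.mpr (by omega : 1 < s))

lemma norm_li_term_le (hx : |x| ≤ 1) (n : ℕ) :
    ‖x ^ (n + 1) / ((n : ℝ) + 1) ^ s‖ ≤ 1 / ((n : ℝ) + 1) ^ s := by
  rw [norm_div, norm_pow, norm_pow, norm_eq_abs, norm_of_nonneg (by positivity)]
  gcongr
  exact pow_le_one₀ (abs_nonneg x) hx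

lemma hasSum_li (hs : 2 ≤ s) (hx : |x| ≤ 1) :
    HasSum (fun n : ℕ => x ^ (n + 1) / ((n : ℝ) + 1) ^ s) (Li s x) :=
  ((summable_one_div_nat_add_one_pow hs).of_norm_bounded (norm_li_term_le hx)).hasSum

lemma summable_li_of_abs_lt_one (hx : |x| < 1) :
    Summable fun n : ℕ => x ^ (n + 1) / ((n : ℝ) + 1) ^ s := by
  refine ((summable_nat_add_iff 1).mpr (summable_geometric_of_lt_one (abs_nonneg x) hx))
    |>.of_norm_bounded fun n => ?_
  rw [norm_div, norm_pow, norm_pow, norm_eq_abs, norm_of_nonneg (by positivity)]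
  exact div_le_self (by positivity) (one_le_pow₀ (by linarith [n.cast_nonneg (α := ℝ)]))

lemma li_zero : Li s 0 = 0 := by simp [Li]

lemma li_two_one : Li 2 1 = π ^ 2 / 6 := by
  refine (hasSum_li le_rfl (by norm_num)).unique ?_
  simpa using (hasSum_nat_add_iff' 1).mpr hasSum_zeta_two

lemma li_one (hx : |x| < 1) : Li 1 x = -log (1 - x) := by
  simpa [Li] using (hasSum_pow_div_log_of_abs_lt_one hx).tsum_eq

lemma continuousOn_li (hs : 2 ≤ s) : ContinuousOn (Li s) (Icc (-1) 1) :=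
  continuousOn_tsum (fun n => (continuous_pow (n + 1)).continuousOn.div_const _)
    (summable_one_div_nat_add_one_pow hs) fun n _ hx => norm_li_term_le (abs_le.mpr hx) n

lemma li_add_li_neg (hs : 2 ≤ s) (hx : |x| ≤ 1) :
    Li s x + Li s (-x) = 2 / 2 ^ s * Li s (x ^ 2) := by
  have hx2 : |x ^ 2| ≤ 1 := by rw [abs_pow]; exact pow_le_one₀ (abs_nonneg x) hx
  refine ((hasSum_li hs hx).add (hasSum_li hs (by rwa [abs_neg]))).unique ?_
  rw [← zero_add (2 / 2 ^ s * Li s (x ^ 2))]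
  refine HasSum.even_add_odd ?_ ?_
  · convert hasSum_zero using 1
    funext m
    rw [Odd.neg_pow ⟨m, rfl⟩ x]
    ring
  · have h := (hasSum_li hs hx2).const_smul ((2 : ℝ) / 2 ^ s)
    simp only [smul_eq_mul] at h
    convert h using 2 with m
    push_cast
    rw [show 2 * m + 1 + 1 = 2 * (m + 1) by ring, pow_mul, pow_mul, neg_sq,
      show (2 * (m : ℝ) + 1 + 1) = 2 * ((m : ℝ) + 1) by ring, mul_pow]
    field_simp
    ring

lemma hasDerivAt_li_succ (hx : |x| < 1) (hx0 : x ≠ 0) :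
    HasDerivAt (Li (s + 1)) (Li s x / x) x := by
  obtain ⟨r, hxr, hr1⟩ := exists_between hx
  have hr0 : 0 ≤ r := (abs_nonneg x).trans hxr.le
  have hxr : x ∈ Ioo (-r) r := abs_lt.mp hxr
  have h := hasDerivAt_tsum_of_isPreconnected (u := fun n : ℕ => r ^ n)
    (g := fun n y => y ^ (n + 1) / ((n : ℝ) + 1) ^ (s + 1))
    (g' := fun n y => y ^ n / ((n : ℝ) + 1) ^ s)
    (summable_geometric_of_lt_one hr0 hr1)
    isOpen_Ioo isPreconnected_Ioo (fun n y _ => ?deriv) (fun n y hy => ?bound)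
    hxr (summable_li_of_abs_lt_one hx) hxr
  case deriv =>
    refine ((hasDerivAt_pow (n + 1) y).div_const _).congr_deriv ?_
    rw [Nat.add_sub_cancel]
    push_cast
    field_simp
    ring
  case bound =>
    rw [norm_div, norm_pow, norm_pow, norm_eq_abs, norm_of_nonneg (by positivity)]
    refine div_le_of_le_mul₀ (by positivity) (by positivity) ?_
    calc |y| ^ n ≤ r ^ n := by gcongr; exact abs_lt.mpr hy |>.le
      _ ≤ r ^ n * ((n : ℝ) + 1) ^ s := le_mul_of_one_le_right (by positivity)
          (one_le_pow₀ (by linarith [n.cast_nonneg (α := ℝ)]))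
  refine h.congr_deriv ?_
  rw [Li, eq_div_iff hx0, ← tsum_mul_right]
  congr 1 with n
  ring

lemma hasDerivAt_li_two (hx : |x| < 1) (hx0 : x ≠ 0) :
    HasDerivAt (Li 2) (-log (1 - x) / x) x := by
  simpa [li_one hx] using hasDerivAt_li_succ (s := 1) hx hx0

lemma HasDerivAt.li_two {f : ℝ → ℝ} {f' : ℝ} (hf : HasDerivAt f f' x) (h1 : |f x| < 1)
    (h0 : f x ≠ 0) : HasDerivAt (fun y => Li 2 (f y)) (-Real.log (1 - f x) / f x * f') x :=
  (hasDerivAt_li_two h1 h0).comp x hf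

lemma li_two_add_li_two_one_sub (hx0 : 0 < x) (hx1 : x ≤ 1) :
    Li 2 x + Li 2 (1 - x) = π ^ 2 / 6 - log x * log (1 - x) := by
  let F t := Li 2 t + Li 2 (1 - t) + log t * log (1 - t)
  have hconst : F x = F 1 := by
    refine eq_of_hasDerivAt_zero hx1 ?_ fun t ht => ?_
    · have hmaps : MapsTo (fun t => 1 - t) (Icc x 1) (Icc (-1) 1) :=
        fun t ht => ⟨by linarith [ht.2], by linarith [ht.1]⟩
      refine (((continuousOn_li le_rfl).mono (Icc_subset_Icc (by linarith) le_rfl)).add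
        ((continuousOn_li le_rfl).comp (by fun_prop) hmaps)).add
        (continuousOn_log_mul_log_one_sub.mono fun t ht => hx0.trans_le ht.1)
    · have h0 : 0 < t := hx0.trans ht.1
      have h1 : 0 < 1 - t := by linarith [ht.2]
      have hsub := (hasDerivAt_id' t).const_sub 1
      have hd := ((hasDerivAt_li_two (abs_lt.mpr ⟨by linarith, ht.2⟩) h0.ne').add
        (hsub.li_two (abs_lt.mpr ⟨by linarith, by linarith⟩) h1.ne')).add
        ((hasDerivAt_log h0.ne').mul (hsub.log h1.ne'))
      refine hd.congr_deriv ?_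
      rw [sub_sub_cancel]
      field_simp
      ring
  simpa [F, li_zero, li_two_one, eq_sub_iff_add_eq] using hconst

lemma li_two_add_li_two_neg_div_one_sub (hx0 : 0 ≤ x) (hx : x ≤ 1 / 2) :
    Li 2 x + Li 2 (-x / (1 - x)) = -log (1 - x) ^ 2 / 2 := by
  let F t := Li 2 t + Li 2 (-t / (1 - t)) + log (1 - t) ^ 2 / 2
  have hconst : F 0 = F x := by
    refine eq_of_hasDerivAt_zero hx0 ?_ fun t ht => ?_
    · have hne : ∀ t ∈ Icc 0 x, 1 - t ≠ 0 := fun t ht => by linarith [ht.2]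
      have hmaps : MapsTo (fun t => -t / (1 - t)) (Icc 0 x) (Icc (-1) 1) := by
        intro t ht
        have h1 : 0 < 1 - t := by linarith [ht.2]
        constructor
        · rw [le_div_iff₀ h1]; linarith [ht.2]
        · exact (div_nonpos_of_nonpos_of_nonneg (by linarith [ht.1]) h1.le).trans zero_le_one
      refine (((continuousOn_li le_rfl).mono (Icc_subset_Icc (by norm_num) (by linarith))).add
        ((continuousOn_li le_rfl).comp (by fun_prop (disch := exact hne)) hmaps)).add ?_
      fun_prop (disch := exact hne)
    · have h0 : 0 < t := ht.1
      have h1 : 0 < 1 - t := by linarith [ht.2]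
      have hsub := (hasDerivAt_id' t).const_sub 1
      have hw : HasDerivAt (fun s => -s / (1 - s)) ((-1 * (1 - t) - -t * -1) / (1 - t) ^ 2) t :=
        (hasDerivAt_id' t).neg.div hsub h1.ne'
      have hw_abs : |-t / (1 - t)| < 1 := by
        rw [abs_lt, lt_div_iff₀ h1, div_lt_iff₀ h1]
        constructor <;> linarith [ht.2]
      have hw_ne : -t / (1 - t) ≠ 0 := div_ne_zero (neg_ne_zero.mpr h0.ne') h1.ne'
      have hd := ((hasDerivAt_li_two (abs_lt.mpr ⟨by linarith, by linarith [ht.2]⟩) h0.ne').add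
        (hw.li_two hw_abs hw_ne)).add (((hsub.log h1.ne').pow 2).div_const 2)
      refine hd.congr_deriv ?_
      rw [show 1 - -t / (1 - t) = (1 - t)⁻¹ by field_simp; ring, log_inv]
      field_simp
      ring
  have hF0 : F 0 = 0 := by simp [F, li_zero]
  have hFx : F x = 0 := hconst ▸ hF0
  dsimp only [F] at hFx
  linarith

end Polylog

lemma cos_two_pi_div_seven_cubic :
    8 * cos (2 * π / 7) ^ 3 + 4 * cos (2 * π / 7) ^ 2 - 4 * cos (2 * π / 7) - 1 = 0 := by
  set θ := 2 * π / 7 with hθ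
  have h43 : cos (4 * θ) = cos (3 * θ) := by
    rw [show 4 * θ = 2 * π - 3 * θ by rw [hθ]; ring, cos_two_pi_sub]
  have hne : cos θ ≠ 1 := by
    rw [Ne, cos_eq_one_iff_of_lt_of_lt (by linarith [pi_pos]) (by linarith [pi_pos])]
    exact (by positivity : θ ≠ 0)
  rw [show 4 * θ = 2 * (2 * θ) by ring, cos_two_mul, cos_two_mul, cos_three_mul] at h43
  have h : (cos θ - 1) * (8 * cos θ ^ 3 + 4 * cos θ ^ 2 - 4 * cos θ - 1) = 0 := by
    linear_combination h43
  exact (mul_eq_zero.mp h).resolve_left (sub_ne_zero.mpr hne)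

theorem li_two_sub_li_two_sq_of_cubic {a : ℝ} (ha : 0 < a)
    (hcubic : a ^ 3 + 2 * a ^ 2 - a - 1 = 0) :
    Li 2 a - Li 2 (a ^ 2) = π ^ 2 / 42 + log a ^ 2 := by
  have ha1 : a < 1 := by nlinarith
  have ha2 : 1 / 2 < a ^ 2 := by nlinarith
  obtain ⟨b, hb, hab⟩ : ∃ b, 0 < b ∧ b * (1 + a) = a := ⟨a / (1 + a), by positivity, by field_simp⟩
  have h1a : 1 - a = b ^ 2 := by nlinarith
  have h1a2 : 1 - a ^ 2 = a * b := by nlinarith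
  have h1b : 1 - b = b / a := by field_simp; linarith
  have h1b_sq : 1 - (1 - b) ^ 2 = b / a ^ 2 := by field_simp; nlinarith
  have hb2 : b ≤ 1 / 2 := by nlinarith
  have hb_sq_le : (1 - b) ^ 2 ≤ 1 / 2 := by nlinarith
  have habs {x : ℝ} (h0 : 0 < x) (h1 : x ≤ 1) : |x| ≤ 1 := abs_le.mpr ⟨by linarith, h1⟩
  have dup_a := li_add_li_neg le_rfl (habs ha ha1.le)
  have dup_b := li_add_li_neg le_rfl (habs hb (by linarith))
  have dup_one_sub_b := li_add_li_neg le_rfl (habs (x := 1 - b) (by linarith) (by linarith))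
  have refl_a := li_two_add_li_two_one_sub ha ha1.le
  rw [h1a, log_pow] at refl_a
  have refl_a2 := li_two_add_li_two_one_sub (x := a ^ 2) (by positivity) (by nlinarith)
  rw [h1a2, log_pow, log_mul ha.ne' hb.ne'] at refl_a2
  have refl_one_sub_b := li_two_add_li_two_one_sub (x := 1 - b) (by linarith) (by linarith)
  rw [sub_sub_cancel, h1b, log_div hb.ne' ha.ne', ← h1b] at refl_one_sub_b
  have landen_ab := li_two_add_li_two_neg_div_one_sub (x := a * b) (by positivity) (by nlinarith)
  rw [show 1 - a * b = a ^ 2 by linarith, show -(a * b) / a ^ 2 = -(1 - b) by rw [h1b]; field_simp,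
    log_pow] at landen_ab
  have landen_b := li_two_add_li_two_neg_div_one_sub hb.le hb2
  rw [show -b / (1 - b) = -a by rw [h1b]; field_simp, h1b, log_div hb.ne' ha.ne'] at landen_b
  have landen_one_sub_b_sq := li_two_add_li_two_neg_div_one_sub (by positivity) hb_sq_le
  rw [h1b_sq, show -(1 - b) ^ 2 / (b / a ^ 2) = -b by rw [h1b]; field_simp,
    log_div hb.ne' (by positivity), log_pow] at landen_one_sub_b_sq
  linear_combination (6/7) * dup_a + (2/7) * dup_b - (4/7) * dup_one_sub_b + (1/7) * refl_a
    - (4/7) * refl_a2 + (4/7) * refl_one_sub_b + (4/7) * landen_ab - (6/7) * landen_b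
    - (2/7) * landen_one_sub_b_sq

theorem stmt_4 :
    Li 2 (1 / (2 * Real.cos (2 * Real.pi / 7)))
      - Li 2 ((1 / (2 * Real.cos (2 * Real.pi / 7))) ^ 2)
      = Real.pi ^ 2 / 42 + (Real.log (1 / (2 * Real.cos (2 * Real.pi / 7)))) ^ 2 := by
  have hcos : 0 < cos (2 * π / 7) := cos_pos_of_mem_Ioo ⟨by linarith [pi_pos], by linarith [pi_pos]⟩
  refine li_two_sub_li_two_sq_of_cubic (by positivity) ?_
  field_simp
  linear_combination -cos_two_pi_div_seven_cubic
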